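/- arXiv:2302.08737 — 2 statements merged into one kernel-verified Lean document; each statement's English description precedes it below -/
import Mathlib

section
/- The torsion tensor T² of the second natural connection satisfies the identity (*): T²(x,y,z) + T²(y,z,x) + T²(φx,y,φz) + T²(y,φz,φx) − η(x)(T²(ξ,y,z) + T²(y,z,ξ) − η(y)T²(ξ,z,ξ)) − η(y)(T²(x,ξ,z) + T²(ξ,z,x) + T²(φx,ξ,φz) + T²(ξ,φz,φx)) − η(z)(T²(x,y,ξ) + T²(y,ξ,x) − η(y)T²(x,ξ,ξ)) = 0 for all x, y, z ∈ V. -/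
open scoped RealInnerProductSpace

noncomputable section

variable {V : Type*} [NormedAddCommGroup V] [InnerProductSpace ℝ V]

/-- A Riemannian Π-structure on a real inner product space `V`:
a linear map `phi`, a vector `xi` (with dual form `η x = ⟪x, xi⟫`) satisfying
the defining algebraic identities. -/
structure PiStruct (V : Type*) [NormedAddCommGroup V] [InnerProductSpace ℝ V] where
  phi : V →ₗ[ℝ] V
  xi : V
  phi_xi : phi xi = 0
  phi_phi : ∀ x : V, phi (phi x) = x - (⟪x, xi⟫ : ℝ) • xi
  eta_phi : ∀ x : V, ⟪phi x, xi⟫ = 0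
  eta_xi : ⟪xi, xi⟫ = (1 : ℝ)
  g_phi_phi : ∀ x y : V, ⟪phi x, phi y⟫ = ⟪x, y⟫ - ⟪x, xi⟫ * ⟪y, xi⟫
  g_phi_symm : ∀ x y : V, ⟪phi x, y⟫ = ⟪x, phi y⟫

/-- Trilinear real-valued maps on `V`. -/
abbrev Tri (V : Type*) [NormedAddCommGroup V] [InnerProductSpace ℝ V] :=
  V →ₗ[ℝ] V →ₗ[ℝ] V →ₗ[ℝ] ℝ

/-- The 1-form `η(x) = g(x, ξ)`. -/
def PiStruct.eta (P : PiStruct V) (x : V) : ℝ := ⟪x, P.xi⟫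

/-- `F` is a fundamental tensor for the Π-structure `P`. -/
def IsFund (P : PiStruct V) (F : Tri V) : Prop :=
  (∀ x y z : V, F x y z = F x z y) ∧
  (∀ x y z : V, F x y z =
    -F x (P.phi y) (P.phi z) + P.eta y * F x P.xi z + P.eta z * F x y P.xi)

/-- The Nijenhuis tensor of `F`. -/
def Nij (P : PiStruct V) (F : Tri V) (x y z : V) : ℝ :=
  F (P.phi x) y z - F (P.phi y) x z - F x y (P.phi z) + F y x (P.phi z)
    + P.eta z * (F x (P.phi y) P.xi - F y (P.phi x) P.xi)

/-- The potential of the first natural connection. -/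
def Q1 (P : PiStruct V) (F : Tri V) (x y z : V) : ℝ :=
  -(1/2) * F x (P.phi y) z - (1/2) * P.eta z * F x (P.phi y) P.xi
    + P.eta y * F x (P.phi z) P.xi

/-- The potential of the second natural connection. -/
def Q2 (P : PiStruct V) (F : Tri V) (x y z : V) : ℝ :=
  Q1 P F x y z - (1/8) * (Nij P F (P.phi (P.phi z)) (P.phi (P.phi y)) (P.phi (P.phi x))
    + 2 * P.eta x * Nij P F (P.phi z) (P.phi y) P.xi)

/-- The torsion tensor of the first natural connection. -/
def T1 (P : PiStruct V) (F : Tri V) (x y z : V) : ℝ :=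
  -(1/2) * (F x (P.phi y) z - F y (P.phi x) z)
    - (1/2) * P.eta z * (F x (P.phi y) P.xi - F y (P.phi x) P.xi)
    + P.eta y * F x (P.phi z) P.xi - P.eta x * F y (P.phi z) P.xi

/-- The torsion tensor of the second natural connection. -/
def T2 (P : PiStruct V) (F : Tri V) (x y z : V) : ℝ :=
  Q2 P F x y z - Q2 P F y x z

/-- Identity (*) for a torsion-like tensor `T`. -/
def StarId (P : PiStruct V) (T : V → V → V → ℝ) : Prop :=
  ∀ x y z : V,
    T x y z + T y z x + T (P.phi x) y (P.phi z) + T y (P.phi z) (P.phi x)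
    - P.eta x * (T P.xi y z + T y z P.xi - P.eta y * T P.xi z P.xi)
    - P.eta y * (T x P.xi z + T P.xi z x + T (P.phi x) P.xi (P.phi z)
        + T P.xi (P.phi z) (P.phi x))
    - P.eta z * (T x y P.xi + T y P.xi x - P.eta y * T x P.xi P.xi) = 0

/-!
Write every vector as `a + s ξ` with `η a = 0`. For a trilinear tensor `T` that is
antisymmetric in its first two arguments, all the `η`-terms of (*) then cancel, and (*) reduces
to `T(x,y,z) + T(y,z,x) + T(φx,y,φz) + T(y,φz,φx) = 0` for `x, y, z ∈ ker η`.
On `ker η` we have `φ² = 1` and `F(a,φb,c) = -F(a,b,φc)`, which turn `T²` into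
`-3/8 (F(x,φy,z) - F(y,φx,z)) - 1/8 (F(φx,y,z) - F(φy,x,z)) + 1/4 F(z,φx,y)`;
for this expression the reduced identity is a linear consequence of the same two symmetries of `F`.
-/

namespace PiStruct

variable (P : PiStruct V)

lemma eta_phi_eq_zero (x : V) : P.eta (P.phi x) = 0 := P.eta_phi x

lemma phi_phi_of_eta_eq_zero {x : V} (hx : P.eta x = 0) : P.phi (P.phi x) = x := by
  rw [P.phi_phi, show ⟪x, P.xi⟫ = 0 from hx, zero_smul, sub_zero]

lemma eta_add_smul_xi (a : V) (s : ℝ) : P.eta (a + s • P.xi) = P.eta a + s := by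
  simp only [eta, inner_add_left, real_inner_smul_left, P.eta_xi, mul_one]

lemma phi_add_smul_xi (a : V) (s : ℝ) : P.phi (a + s • P.xi) = P.phi a := by
  simp [P.phi_xi]

lemma exists_eq_add_smul_xi (x : V) : ∃ a : V, ∃ s : ℝ, P.eta a = 0 ∧ x = a + s • P.xi :=
  ⟨P.phi (P.phi x), P.eta x, P.eta_phi_eq_zero _, by rw [P.phi_phi, eta, sub_add_cancel]⟩

theorem starId_of_horizontal (T : Tri V) (hT : ∀ x y z, T x y z = -T y x z)
    (h : ∀ x y z, P.eta x = 0 → P.eta y = 0 → P.eta z = 0 →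
      T x y z + T y z x + T (P.phi x) y (P.phi z) + T y (P.phi z) (P.phi x) = 0) :
    StarId P (fun x y z => T x y z) := by
  intro x y z
  obtain ⟨a, s, ha, rfl⟩ := P.exists_eq_add_smul_xi x
  obtain ⟨b, t, hb, rfl⟩ := P.exists_eq_add_smul_xi y
  obtain ⟨c, u, hc, rfl⟩ := P.exists_eq_add_smul_xi z
  have hξξ : ∀ w, T P.xi P.xi w = 0 := fun w => by linarith [hT P.xi P.xi w]
  simp only [P.eta_add_smul_xi, P.phi_add_smul_xi, ha, hb, hc, map_add, map_smul,
    LinearMap.add_apply, LinearMap.smul_apply, smul_eq_mul, hξξ, hT P.xi b, hT P.xi c,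
    hT P.xi (P.phi c)]
  linear_combination h a b c ha hb hc

end PiStruct

namespace IsFund

variable {P : PiStruct V} {F : Tri V}

lemma apply_phi_phi_of_horizontal (hF : IsFund P F) (a : V) {b c : V} (hb : P.eta b = 0)
    (hc : P.eta c = 0) : F a (P.phi b) (P.phi c) = -F a b c := by
  linear_combination hF.2 a b c + F a P.xi c * hb + F a b P.xi * hc

lemma apply_phi_left_of_horizontal (hF : IsFund P F) (a : V) {b c : V} (hb : P.eta b = 0)
    (hc : P.eta c = 0) : F a (P.phi b) c = -F a b (P.phi c) := by
  simpa only [P.phi_phi_of_eta_eq_zero hc] using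
    hF.apply_phi_phi_of_horizontal a hb (P.eta_phi_eq_zero c)

end IsFund

lemma T2_swap (P : PiStruct V) (F : Tri V) (x y z : V) : T2 P F x y z = -T2 P F y x z := by
  unfold T2
  ring

def T2Tri (P : PiStruct V) (F : Tri V) : Tri V where
  toFun x := LinearMap.mk₂ ℝ (T2 P F x)
    (fun _ _ _ => by
      simp only [T2, Q2, Q1, Nij, PiStruct.eta, map_add, LinearMap.add_apply, inner_add_left]
      ring)
    (fun _ _ _ => by
      simp only [T2, Q2, Q1, Nij, PiStruct.eta, map_smul, LinearMap.smul_apply, smul_eq_mul,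
        real_inner_smul_left]
      ring)
    (fun _ _ _ => by
      simp only [T2, Q2, Q1, Nij, PiStruct.eta, map_add, LinearMap.add_apply, inner_add_left]
      ring)
    (fun _ _ _ => by
      simp only [T2, Q2, Q1, Nij, PiStruct.eta, map_smul, LinearMap.smul_apply, smul_eq_mul,
        real_inner_smul_left]
      ring)
  map_add' _ _ := LinearMap.ext₂ fun _ _ => by
    simp only [LinearMap.mk₂_apply, LinearMap.add_apply, T2, Q2, Q1, Nij, PiStruct.eta, map_add,
      inner_add_left]
    ring
  map_smul' _ _ := LinearMap.ext₂ fun _ _ => by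
    simp only [LinearMap.mk₂_apply, LinearMap.smul_apply, T2, Q2, Q1, Nij, PiStruct.eta,
      map_smul, smul_eq_mul, real_inner_smul_left, RingHom.id_apply]
    ring

lemma T2_of_horizontal {P : PiStruct V} {F : Tri V} (hF : IsFund P F) {x y z : V}
    (hx : P.eta x = 0) (hy : P.eta y = 0) (hz : P.eta z = 0) :
    T2 P F x y z = -(3/8) * (F x (P.phi y) z - F y (P.phi x) z)
      - (1/8) * (F (P.phi x) y z - F (P.phi y) x z) + (1/4) * F z (P.phi x) y := by
  simp only [T2, Q2, Q1, Nij, P.phi_phi_of_eta_eq_zero, hx, hy, hz, mul_zero, zero_mul,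
    add_zero, sub_zero]
  linear_combination (-1/8) * (hF.1 x (P.phi y) z) + (-1/8) * (hF.1 (P.phi z) y x)
    + (1/8) * (hF.1 (P.phi y) z x) + (-1/8) * (hF.1 z y (P.phi x))
    + (-1/8) * (hF.apply_phi_left_of_horizontal z hx hy) + (1/8) * (hF.1 y (P.phi x) z)
    + (-1/8) * (hF.1 (P.phi x) z y) + (-1/4) * (hF.1 z (P.phi x) y)

lemma T2_star_of_horizontal {P : PiStruct V} {F : Tri V} (hF : IsFund P F) {x y z : V}
    (hx : P.eta x = 0) (hy : P.eta y = 0) (hz : P.eta z = 0) :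
    T2 P F x y z + T2 P F y z x + T2 P F (P.phi x) y (P.phi z)
      + T2 P F y (P.phi z) (P.phi x) = 0 := by
  have hφx := P.eta_phi_eq_zero x
  have hφz := P.eta_phi_eq_zero z
  rw [T2_of_horizontal hF hx hy hz, T2_of_horizontal hF hy hz hx,
    T2_of_horizontal hF hφx hy hφz, T2_of_horizontal hF hy hφz hφx,
    P.phi_phi_of_eta_eq_zero hx, P.phi_phi_of_eta_eq_zero hz]
  linear_combination (-1/8) * (hF.1 x z (P.phi y))
    + (-1/8) * (hF.apply_phi_left_of_horizontal x hy hz) + (-1/8) * (hF.1 x (P.phi y) z)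
    + (3/8) * (hF.1 y (P.phi x) z) + (3/8) * (hF.1 z y (P.phi x))
    + (3/8) * (hF.apply_phi_left_of_horizontal z hx hy) + (1/4) * (hF.1 z (P.phi x) y)
    + (-3/8) * (hF.1 y (P.phi z) x) + (3/8) * (hF.1 z (P.phi y) x)
    + (-1/4) * (hF.1 (P.phi z) y x)
    + (-1/8) * (hF.apply_phi_phi_of_horizontal (P.phi x) hy hz)
    + (1/8) * (hF.apply_phi_phi_of_horizontal (P.phi y) hx hz)
    + (3/8) * (hF.apply_phi_phi_of_horizontal (P.phi z) hy hx)
    + (-1/8) * (hF.apply_phi_phi_of_horizontal (P.phi y) hz hx)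

theorem T2_satisfies_star_identity_general
    (P : PiStruct V) (F : Tri V) (hF : IsFund P F) :
    StarId P (T2 P F) :=
  P.starId_of_horizontal (T2Tri P F) (T2_swap P F) fun _ _ _ => T2_star_of_horizontal hF

/-- the torsion tensor `T²` of the second natural connection satisfies
identity (*). -/
theorem T2_satisfies_star_identity
    [FiniteDimensional ℝ V] (n : ℕ) (hn : 1 ≤ n)
    (hdim : Module.finrank ℝ V = 2 * n + 1)
    (P : PiStruct V) (F : Tri V) (hF : IsFund P F) :
    StarId P (T2 P F) :=
  T2_satisfies_star_identity_general P F hF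
end
end

section
/- If the fundamental tensor F satisfies the defining condition of any one of the basic classes F₁, F₂, F₄, F₅, F₆, F₈, F₉, F₁₀, F₁₁ listed in the context, then its Nijenhuis tensor satisfies N(φx, φy, z) = 0 for all x, y, z ∈ V; consequently any finite sum of fundamental tensors, each satisfying one of these nine conditions, has Nijenhuis tensor vanishing on (φ·, φ·, ·). -/
open scoped RealInnerProductSpace

noncomputable section

variable {V : Type*} [NormedAddCommGroup V] [InnerProductSpace ℝ V]

/-- The Lee form `θ(z) = Σᵢ F(eᵢ, eᵢ, z)` with respect to a family `e`. -/
def theta (F : Tri V) {m : ℕ} (e : Fin m → V) (z : V) : ℝ := ∑ i, F (e i) (e i) z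

/-- The Lee form `θ*(z) = Σᵢ F(eᵢ, φeᵢ, z)` with respect to a family `e`. -/
def thetaS (P : PiStruct V) (F : Tri V) {m : ℕ} (e : Fin m → V) (z : V) : ℝ :=
  ∑ i, F (e i) (P.phi (e i)) z

/-- The Lee form `ω(z) = F(ξ, ξ, z)`. -/
def omg (P : PiStruct V) (F : Tri V) (z : V) : ℝ := F P.xi P.xi z

/-- `F` satisfies the defining condition of one of the nine basic classes
F₁, F₂, F₄, F₅, F₆, F₈, F₉, F₁₀, F₁₁. -/
def NineClass (P : PiStruct V) (F : Tri V) {m : ℕ} (e : Fin m → V) (n : ℕ) : Prop :=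
  -- F₁
  (∀ x y z : V, F x y z = (1 / (2 * (n : ℝ))) *
      (⟪P.phi x, P.phi y⟫ * theta F e (P.phi (P.phi z))
        + ⟪P.phi x, P.phi z⟫ * theta F e (P.phi (P.phi y))
        - ⟪x, P.phi y⟫ * theta F e (P.phi z)
        - ⟪x, P.phi z⟫ * theta F e (P.phi y)))
  ∨ -- F₂
  ((∀ y z : V, F P.xi y z = 0) ∧ (∀ x z : V, F x P.xi z = 0) ∧
    (∀ z : V, theta F e z = 0) ∧
    (∀ x y z : V, F x y (P.phi z) + F y z (P.phi x) + F z x (P.phi y) = 0))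
  ∨ -- F₄
  (∀ x y z : V, F x y z = (theta F e P.xi / (2 * (n : ℝ))) *
      (⟪P.phi x, P.phi y⟫ * P.eta z + ⟪P.phi x, P.phi z⟫ * P.eta y))
  ∨ -- F₅
  (∀ x y z : V, F x y z = (thetaS P F e P.xi / (2 * (n : ℝ))) *
      (⟪x, P.phi y⟫ * P.eta z + ⟪x, P.phi z⟫ * P.eta y))
  ∨ -- F₆
  ((∀ x y z : V, F x y z = F x y P.xi * P.eta z + F x z P.xi * P.eta y) ∧
    (∀ x y : V, F x y P.xi = F y x P.xi) ∧
    (∀ x y : V, F x y P.xi = F (P.phi x) (P.phi y) P.xi))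
  ∨ -- F₈
  ((∀ x y z : V, F x y z = F x y P.xi * P.eta z + F x z P.xi * P.eta y) ∧
    (∀ x y : V, F x y P.xi = F y x P.xi) ∧
    (∀ x y : V, F x y P.xi = -F (P.phi x) (P.phi y) P.xi))
  ∨ -- F₉
  ((∀ x y z : V, F x y z = F x y P.xi * P.eta z + F x z P.xi * P.eta y) ∧
    (∀ x y : V, F x y P.xi = -F y x P.xi) ∧
    (∀ x y : V, F x y P.xi = -F (P.phi x) (P.phi y) P.xi))
  ∨ -- F₁₀
  (∀ x y z : V, F x y z = -(P.eta x) * F P.xi (P.phi y) (P.phi z))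
  ∨ -- F₁₁
  (∀ x y z : V, F x y z = P.eta x * (P.eta y * omg P F z + P.eta z * omg P F y))

/-!
`Nij` is linear in `F`, so it suffices to treat one basic class at a time, and in each class
`Nij(φx, φy, z)` is evaluated directly. For F₁, F₄, F₅ this is an algebraic identity resting on
`φ³ = φ` and the symmetry of `g(·, φ·)`. For F₁₀, F₁₁ the tensor vanishes when its first argument
lies in `ker η ⊇ im φ`, and `Nij(φx, φy, ·)` only evaluates `F` there. For F₆, F₈, F₉ the tensor is
determined by `f(a, b) = F(a, b, ξ)`, and `Nij(φx, φy, z)` reduces to `η(z)` times a combination of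
values of `f` that cancels by symmetry of `f` (F₆) or by `f(a, b) = -f(φa, φb)` (F₈, F₉). For F₂,
`F(a, φb, φc) = -F(a, b, c)`, and `Nij(φx, φy, z)` is minus the sum of the cyclic identity at
`(x, y, z)` and at `(φx, φy, z)`.
-/

namespace PiStruct

variable (P : PiStruct V)

lemma inner_phi_comm (x y : V) : ⟪x, P.phi y⟫ = ⟪y, P.phi x⟫ := by
  rw [real_inner_comm, P.g_phi_symm]

lemma eta_xi_eq_one : P.eta P.xi = 1 := P.eta_xi

lemma phi_phi_phi (x : V) : P.phi (P.phi (P.phi x)) = P.phi x := by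
  rw [P.phi_phi (P.phi x), P.eta_phi, zero_smul, sub_zero]

lemma inner_phi_phi_comm (x y : V) : ⟪x, P.phi (P.phi y)⟫ = ⟪y, P.phi (P.phi x)⟫ := by
  rw [← P.g_phi_symm, ← P.g_phi_symm, real_inner_comm]

end PiStruct

namespace IsFund

variable {P : PiStruct V} {F : Tri V}

lemma apply_xi_right_eq_zero (hF : IsFund P F) (hξ : ∀ a c : V, F a P.xi c = 0) (a b : V) :
    F a b P.xi = 0 := by
  rw [hF.1, hξ]

lemma apply_phi_phi_eq_neg (hF : IsFund P F) (hξ : ∀ a c : V, F a P.xi c = 0) (a b c : V) :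
    F a (P.phi b) (P.phi c) = -F a b c := by
  have h := hF.2 a b c
  rw [hξ, hF.apply_xi_right_eq_zero hξ, mul_zero, mul_zero, add_zero, add_zero] at h
  linarith

lemma apply_phi_swap (hF : IsFund P F) (hξ : ∀ a c : V, F a P.xi c = 0) (a b c : V) :
    F a b (P.phi c) = -F a c (P.phi b) := by
  have h := hF.apply_phi_phi_eq_neg hξ a c (P.phi b)
  rwa [P.phi_phi, map_sub, map_smul, hF.apply_xi_right_eq_zero hξ, smul_zero, sub_zero, hF.1] at h

end IsFund

section Nijenhuis

variable (P : PiStruct V) {F : Tri V}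

lemma Nij_sum {ι : Type*} (s : Finset ι) (Fs : ι → Tri V) (x y z : V) :
    Nij P (∑ j ∈ s, Fs j) x y z = ∑ j ∈ s, Nij P (Fs j) x y z := by
  simp only [Nij, LinearMap.sum_apply, Finset.sum_sub_distrib,
    Finset.sum_add_distrib, Finset.mul_sum, mul_sub]

lemma theta_eq_coe_sum {m : ℕ} (F : Tri V) (e : Fin m → V) :
    theta F e = ⇑(∑ i, F (e i) (e i)) := by
  ext z
  simp [theta]

lemma Nij_phi_phi_eq_zero_of_classF1 (c : ℝ) (θ : V →ₗ[ℝ] ℝ)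
    (hF : ∀ x y z : V, F x y z = c *
      (⟪P.phi x, P.phi y⟫ * θ (P.phi (P.phi z)) + ⟪P.phi x, P.phi z⟫ * θ (P.phi (P.phi y))
        - ⟪x, P.phi y⟫ * θ (P.phi z) - ⟪x, P.phi z⟫ * θ (P.phi y)))
    (x y z : V) : Nij P F (P.phi x) (P.phi y) z = 0 := by
  simp only [Nij, hF, P.phi_phi_phi, P.phi_xi, map_zero, inner_zero_right, mul_zero, sub_zero,
    zero_add, P.g_phi_symm]
  rw [P.inner_phi_comm y x, P.inner_phi_comm y z, P.inner_phi_phi_comm x y]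
  ring

lemma Nij_phi_phi_eq_zero_of_classF4 (c : ℝ)
    (hF : ∀ x y z : V, F x y z = c * (⟪P.phi x, P.phi y⟫ * P.eta z + ⟪P.phi x, P.phi z⟫ * P.eta y))
    (x y z : V) : Nij P F (P.phi x) (P.phi y) z = 0 := by
  simp only [Nij, hF, P.eta_phi_eq_zero, P.eta_xi_eq_one, P.phi_phi_phi, P.g_phi_phi, P.eta_phi]
  rw [P.g_phi_symm x y, P.g_phi_symm y x, P.inner_phi_comm y x]
  ring

lemma Nij_phi_phi_eq_zero_of_classF5 (c : ℝ)
    (hF : ∀ x y z : V, F x y z = c * (⟪x, P.phi y⟫ * P.eta z + ⟪x, P.phi z⟫ * P.eta y))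
    (x y z : V) : Nij P F (P.phi x) (P.phi y) z = 0 := by
  simp only [Nij, hF, P.eta_phi_eq_zero, P.eta_xi_eq_one, P.phi_phi_phi, P.g_phi_phi, P.eta_phi]
  rw [real_inner_comm x y]
  ring

lemma Nij_phi_phi_eq_zero_of_forall_eta_eq_zero (hF : ∀ a b c : V, P.eta a = 0 → F a b c = 0)
    (x y z : V) : Nij P F (P.phi x) (P.phi y) z = 0 := by
  simp only [Nij, hF _ _ _ (P.eta_phi_eq_zero _), sub_self, mul_zero, add_zero]

lemma tri_xi_left_xi_eq_zero (s : ℝ)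
    (hp : ∀ a b : V, F a b P.xi = s * F (P.phi a) (P.phi b) P.xi) (b : V) :
    F P.xi b P.xi = 0 := by
  rw [hp, P.phi_xi, map_zero, LinearMap.zero_apply, LinearMap.zero_apply, mul_zero]

lemma tri_xi_mid_xi_eq_zero (s : ℝ)
    (hp : ∀ a b : V, F a b P.xi = s * F (P.phi a) (P.phi b) P.xi) (a : V) :
    F a P.xi P.xi = 0 := by
  rw [hp, P.phi_xi, map_zero, LinearMap.zero_apply, mul_zero]

lemma Nij_phi_phi_eq_of_eta_split
    (hd : ∀ x y z : V, F x y z = F x y P.xi * P.eta z + F x z P.xi * P.eta y)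
    (hl : ∀ b : V, F P.xi b P.xi = 0) (hr : ∀ a : V, F a P.xi P.xi = 0) (x y z : V) :
    Nij P F (P.phi x) (P.phi y) z = P.eta z *
      (F x (P.phi y) P.xi - F y (P.phi x) P.xi + F (P.phi x) y P.xi - F (P.phi y) x P.xi) := by
  rw [Nij, hd (P.phi (P.phi x)), hd (P.phi (P.phi y)), hd (P.phi x) _ (P.phi z),
    hd (P.phi y) _ (P.phi z)]
  simp only [P.eta_phi_eq_zero, P.phi_phi, map_sub, map_smul, LinearMap.sub_apply,
    LinearMap.smul_apply, smul_eq_mul, hl, hr]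
  ring

lemma Nij_phi_phi_eq_zero_of_classF6
    (hd : ∀ x y z : V, F x y z = F x y P.xi * P.eta z + F x z P.xi * P.eta y)
    (hs : ∀ x y : V, F x y P.xi = F y x P.xi)
    (hp : ∀ x y : V, F x y P.xi = F (P.phi x) (P.phi y) P.xi) (x y z : V) :
    Nij P F (P.phi x) (P.phi y) z = 0 := by
  have hp' : ∀ a b : V, F a b P.xi = 1 * F (P.phi a) (P.phi b) P.xi := by simpa using hp
  rw [Nij_phi_phi_eq_of_eta_split P hd (tri_xi_left_xi_eq_zero P 1 hp')
    (tri_xi_mid_xi_eq_zero P 1 hp'), hs x, hs y]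
  ring

lemma Nij_phi_phi_eq_zero_of_eq_neg_phi_phi
    (hd : ∀ x y z : V, F x y z = F x y P.xi * P.eta z + F x z P.xi * P.eta y)
    (hp : ∀ x y : V, F x y P.xi = -F (P.phi x) (P.phi y) P.xi) (x y z : V) :
    Nij P F (P.phi x) (P.phi y) z = 0 := by
  have hp' : ∀ a b : V, F a b P.xi = -1 * F (P.phi a) (P.phi b) P.xi := by simpa using hp
  have hr := tri_xi_mid_xi_eq_zero P (-1) hp'
  have hswap : ∀ a b : V, F a (P.phi b) P.xi = -F (P.phi a) b P.xi := by
    intro a b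
    rw [hp, P.phi_phi, map_sub, map_smul, LinearMap.sub_apply, LinearMap.smul_apply, hr,
      smul_zero, sub_zero]
  rw [Nij_phi_phi_eq_of_eta_split P hd (tri_xi_left_xi_eq_zero P (-1) hp') hr, hswap x, hswap y]
  ring

lemma Nij_phi_phi_eq_zero_of_classF2 (hF : IsFund P F) (hξl : ∀ b c : V, F P.xi b c = 0)
    (hξ : ∀ a c : V, F a P.xi c = 0)
    (hcyc : ∀ x y z : V, F x y (P.phi z) + F y z (P.phi x) + F z x (P.phi y) = 0) (x y z : V) :
    Nij P F (P.phi x) (P.phi y) z = 0 := by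
  have hleft : ∀ a b c : V, F (P.phi (P.phi a)) b c = F a b c := fun a b c => by
    rw [P.phi_phi, map_sub, map_smul, LinearMap.sub_apply, LinearMap.sub_apply,
      LinearMap.smul_apply, LinearMap.smul_apply, hξl, smul_zero, sub_zero]
  have hright : ∀ a b c : V, F a b (P.phi (P.phi c)) = F a b c := fun a b c => by
    rw [P.phi_phi, map_sub, map_smul, hF.apply_xi_right_eq_zero hξ, smul_zero, sub_zero]
  have cyc₁ := hcyc x y z
  have cyc₂ := hcyc (P.phi x) (P.phi y) z
  rw [hF.apply_phi_swap hξ y, hF.apply_phi_swap hξ z] at cyc₁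
  rw [hF.apply_phi_phi_eq_neg hξ, hright, hright, hF.1 (P.phi y), hF.1 z] at cyc₂
  rw [Nij, hleft, hleft, hF.apply_phi_phi_eq_neg hξ, hF.apply_phi_phi_eq_neg hξ,
    hF.apply_xi_right_eq_zero hξ, hF.apply_xi_right_eq_zero hξ, hF.1 x, hF.1 y,
    hF.apply_phi_swap hξ x, hF.apply_phi_swap hξ y]
  linear_combination -cyc₁ - cyc₂

lemma Nij_phi_phi_eq_zero_of_nineClass {m : ℕ} {e : Fin m → V} {n : ℕ} (hF : IsFund P F)
    (hN : NineClass P F e n) (x y z : V) :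
    Nij P F (P.phi x) (P.phi y) z = 0 := by
  rcases hN with h1 | ⟨hξl, hξ, -, hcyc⟩ | h4 | h5 | ⟨hd, hs, hp⟩ | ⟨hd, -, hp⟩ | ⟨hd, -, hp⟩ |
    h10 | h11
  · rw [theta_eq_coe_sum] at h1
    exact Nij_phi_phi_eq_zero_of_classF1 P _ _ h1 x y z
  · exact Nij_phi_phi_eq_zero_of_classF2 P hF hξl hξ hcyc x y z
  · exact Nij_phi_phi_eq_zero_of_classF4 P _ h4 x y z
  · exact Nij_phi_phi_eq_zero_of_classF5 P _ h5 x y z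
  · exact Nij_phi_phi_eq_zero_of_classF6 P hd hs hp x y z
  · exact Nij_phi_phi_eq_zero_of_eq_neg_phi_phi P hd hp x y z
  · exact Nij_phi_phi_eq_zero_of_eq_neg_phi_phi P hd hp x y z
  · refine Nij_phi_phi_eq_zero_of_forall_eta_eq_zero P (fun a b c ha => ?_) x y z
    rw [h10, ha, neg_zero, zero_mul]
  · refine Nij_phi_phi_eq_zero_of_forall_eta_eq_zero P (fun a b c ha => ?_) x y z
    rw [h11, ha, zero_mul]

end Nijenhuis

theorem nineClass_N_phi_phi_zero_general
    (n : ℕ)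
    (P : PiStruct V)
    (e : Fin (2 * n) → V) :
    (∀ F : Tri V, IsFund P F → NineClass P F e n →
      ∀ x y z : V, Nij P F (P.phi x) (P.phi y) z = 0) ∧
    (∀ (k : ℕ) (Fs : Fin k → Tri V),
      (∀ j, IsFund P (Fs j) ∧ NineClass P (Fs j) e n) →
      ∀ x y z : V, Nij P (∑ j, Fs j) (P.phi x) (P.phi y) z = 0) := by
  refine ⟨fun F hF hN => Nij_phi_phi_eq_zero_of_nineClass P hF hN, fun k Fs hFs x y z => ?_⟩
  rw [Nij_sum]
  exact Finset.sum_eq_zero fun j _ => Nij_phi_phi_eq_zero_of_nineClass P (hFs j).1 (hFs j).2 x y z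

/-- each of the nine basic classes F₁, F₂, F₄, F₅, F₆, F₈, F₉, F₁₀, F₁₁
has Nijenhuis tensor vanishing on `(φ·, φ·, ·)`, and consequently so does any finite
sum of fundamental tensors from these classes. -/
theorem nineClass_N_phi_phi_zero
    [FiniteDimensional ℝ V] (n : ℕ) (hn : 1 ≤ n)
    (hdim : Module.finrank ℝ V = 2 * n + 1)
    (P : PiStruct V)
    (e : Fin (2 * n) → V) (he : Orthonormal ℝ e)
    (heker : ∀ i, ⟪e i, P.xi⟫ = (0 : ℝ))
    (hespan : ∀ x : V, ⟪x, P.xi⟫ = (0 : ℝ) → x ∈ Submodule.span ℝ (Set.range e)) :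
    (∀ F : Tri V, IsFund P F → NineClass P F e n →
      ∀ x y z : V, Nij P F (P.phi x) (P.phi y) z = 0) ∧
    (∀ (k : ℕ) (Fs : Fin k → Tri V),
      (∀ j, IsFund P (Fs j) ∧ NineClass P (Fs j) e n) →
      ∀ x y z : V, Nij P (∑ j, Fs j) (P.phi x) (P.phi y) z = 0) :=
  nineClass_N_phi_phi_zero_general n P e
end
end
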